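/- arXiv:2103.08382 — 2 statements merged into one kernel-verified Lean document; each statement's English description precedes it below -/
import Mathlib

section
/- Let $T_\alpha$ be the translation $x\mapsto x+\alpha$ on the torus $\mathbb{T}^d$ and $\hat{d}_n^{(r)}(z,\alpha)$ the $r$-th smallest among $\{d(z,k\alpha)\}_{k=0}^{n-1}$. If $\hat{d}_n^{(2)}(z,\alpha)\le\varepsilon$, then for every $r\ge 2$, $\hat{d}_{(r-1)n}^{(r)}(z,\alpha)\le (2r-1)\,\hat{d}_n^{(2)}(z,\alpha)$. -/
/-!
If two visits `a < a + k` before time `n` both come within `ε` of `z`, then the translate `k • α`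
has norm at most `2ε`, so the arithmetic progression `a + s k`, `s < r`, stays within `(2s + 1)ε`
of `z` and ends before time `(r - 1) n`. These are `r` visits within `(2r - 1)ε`.
-/

/-- `hatd z α r n` is the `r`-th smallest value among `d(z, k·α)` for `0 ≤ k < n`,
for the translation by `α` on the torus `𝕋^d`. -/
noncomputable def hatd {d : ℕ} (z α : Fin d → AddCircle (1 : ℝ)) (r n : ℕ) : ℝ :=
  sInf {t : ℝ | r ≤ ((Finset.range n).filter fun k => dist z (k • α) ≤ t).card}

open Finset

noncomputable def orderStatistic {ι : Type*} (s : Finset ι) (f : ι → ℝ) (r : ℕ) : ℝ :=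
  sInf {t : ℝ | r ≤ #{i ∈ s | f i ≤ t}}

namespace orderStatistic

variable {ι : Type*} (s : Finset ι) (f : ι → ℝ) {r : ℕ}

lemma isClosed_setOf_le_card_filter :
    IsClosed {t : ℝ | r ≤ #{i ∈ s | f i ≤ t}} := by
  classical
  have hS : {t : ℝ | r ≤ #{i ∈ s | f i ≤ t}} =
      ⋃ A ∈ {A ∈ s.powerset | r ≤ #A}, ⋂ i ∈ A, Set.Ici (f i) := by
    ext t
    simp only [Set.mem_ofPred_eq, Set.mem_iUnion, Set.mem_iInter, Set.mem_Ici, mem_filter,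
      mem_powerset, exists_prop]
    constructor
    · exact fun h => ⟨_, ⟨filter_subset _ _, h⟩, fun i hi => (mem_filter.1 hi).2⟩
    · rintro ⟨A, ⟨hAs, hrA⟩, hA⟩
      exact hrA.trans (card_le_card fun i hi => mem_filter.2 ⟨hAs hi, hA i hi⟩)
  rw [hS]
  exact isClosed_biUnion_finset fun A _ => isClosed_biInter fun i _ => isClosed_Ici

lemma bddBelow_setOf_le_card_filter (hr : 1 ≤ r) :
    BddBelow {t : ℝ | r ≤ #{i ∈ s | f i ≤ t}} := by
  refine ((s.finite_toSet.bddBelow_biUnion (S := fun i => Set.Ici (f i))).2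
    fun i _ => bddBelow_Ici).mono fun t ht => ?_
  obtain ⟨i, hi⟩ : {i ∈ s | f i ≤ t}.Nonempty :=
    card_pos.1 (by simp only [Set.mem_ofPred_eq] at ht; omega)
  exact Set.mem_biUnion (mem_filter.1 hi).1 (mem_filter.1 hi).2

lemma le_of_le_card_filter (hr : 1 ≤ r) {t : ℝ} (ht : r ≤ #{i ∈ s | f i ≤ t}) :
    orderStatistic s f r ≤ t :=
  csInf_le (bddBelow_setOf_le_card_filter s f hr) ht

lemma le_card_filter_le (hrs : r ≤ #s) : r ≤ #{i ∈ s | f i ≤ orderStatistic s f r} := by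
  rcases Nat.eq_zero_or_pos r with rfl | hr
  · exact Nat.zero_le _
  refine (isClosed_setOf_le_card_filter s f).csInf_mem ?_ (bddBelow_setOf_le_card_filter s f hr)
  obtain ⟨M, hM⟩ := (s.finite_toSet.image f).bddAbove
  refine ⟨M, ?_⟩
  rwa [Set.mem_ofPred_eq, filter_true_of_mem fun i hi => hM (Set.mem_image_of_mem f hi)]

lemma eq_zero_of_card_lt (hrs : #s < r) : orderStatistic s f r = 0 := by
  have hS : {t : ℝ | r ≤ #{i ∈ s | f i ≤ t}} = ∅ :=
    Set.eq_empty_of_forall_notMem fun t ht => (card_filter_le s fun i => f i ≤ t).not_gt (by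
      simp only [Set.mem_ofPred_eq] at ht; omega)
  rw [orderStatistic, hS, Real.sInf_empty]

end orderStatistic

lemma hatd_eq_orderStatistic {d : ℕ} (z α : Fin d → AddCircle (1 : ℝ)) (r n : ℕ) :
    hatd z α r n = orderStatistic (range n) (fun k => dist z (k • α)) r :=
  rfl

section Orbit

variable {G : Type*} [SeminormedAddCommGroup G] {z : G} {ε : ℝ}

lemma dist_add_nsmul_le {x v : G} (hx : dist z x ≤ ε) (hxv : dist z (x + v) ≤ ε) (s : ℕ) :
    dist z (x + s • v) ≤ (2 * s + 1) * ε := by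
  have hv : ‖v‖ ≤ 2 * ε := by
    calc ‖v‖ = dist (x + v) x := by rw [dist_eq_norm, add_sub_cancel_left]
      _ ≤ dist (x + v) z + dist z x := dist_triangle _ _ _
      _ ≤ 2 * ε := by rw [dist_comm]; linarith
  calc dist z (x + s • v) ≤ dist z x + dist x (x + s • v) := dist_triangle _ _ _
    _ = dist z x + ‖s • v‖ := by rw [dist_self_add_right]
    _ ≤ ε + s * (2 * ε) :=
        add_le_add hx (norm_nsmul_le.trans (mul_le_mul_of_nonneg_left hv s.cast_nonneg))
    _ = (2 * s + 1) * ε := by ring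

lemma le_card_filter_dist_nsmul_le {α : G} {a k n r : ℕ} (hk : 0 < k) (hn : a + k < n)
    (hr : 2 ≤ r) (ha : dist z (a • α) ≤ ε) (hak : dist z ((a + k) • α) ≤ ε) :
    r ≤ #{j ∈ range ((r - 1) * n) | dist z (j • α) ≤ (2 * r - 1) * ε} := by
  have hε : 0 ≤ ε := dist_nonneg.trans ha
  have hmono : StrictMono fun s : ℕ => a + s * k := fun _ _ hst =>
    Nat.add_lt_add_left (Nat.mul_lt_mul_of_pos_right hst hk) a
  calc r = #((range r).map ⟨_, hmono.injective⟩) := by rw [card_map, card_range]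
    _ ≤ _ := card_le_card fun j hj => by
      obtain ⟨s, hs, rfl⟩ := mem_map.1 hj
      rw [mem_range] at hs
      refine mem_filter.2 ⟨mem_range.2 ?_, ?_⟩
      · have hsk : s * k ≤ k + (r - 2) * n :=
          calc s * k ≤ (1 + (r - 2)) * k := Nat.mul_le_mul_right k (by omega)
            _ ≤ k + (r - 2) * n := by rw [add_mul, one_mul]; gcongr; omega
        have hr1 : (r - 1) * n = n + (r - 2) * n := by
          rw [← one_add_mul]; congr 1; omega
        simp only [Function.Embedding.coeFn_mk]
        omega
      · have hsr : (s : ℝ) + 1 ≤ r := by exact_mod_cast hs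
        calc dist z ((a + s * k) • α) = dist z (a • α + s • k • α) := by
              rw [add_nsmul, mul_nsmul']
          _ ≤ (2 * s + 1) * ε := dist_add_nsmul_le ha (by rwa [← add_nsmul]) s
          _ ≤ (2 * r - 1) * ε := by nlinarith

end Orbit

theorem toral_translation_multiple_visits_general {d : ℕ} (z α : Fin d → AddCircle (1 : ℝ))
    (n : ℕ) :
    ∀ r : ℕ, 2 ≤ r →
      hatd z α r ((r - 1) * n) ≤ (2 * (r : ℝ) - 1) * hatd z α 2 n := by
  intro r hr
  simp only [hatd_eq_orderStatistic]
  rcases lt_or_ge n 2 with hn | hn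
  · have hrn : (r - 1) * n < r := by
      calc (r - 1) * n ≤ (r - 1) * 1 := Nat.mul_le_mul_left _ (by omega)
        _ < r := by omega
    rw [orderStatistic.eq_zero_of_card_lt _ _ (by rwa [card_range]),
      orderStatistic.eq_zero_of_card_lt _ _ (by rwa [card_range]), mul_zero]
  set m := orderStatistic (range n) (fun k => dist z (k • α)) 2
  set visits := {k ∈ range n | dist z (k • α) ≤ m}
  have hvisits : 1 < #visits :=
    orderStatistic.le_card_filter_le (range n) _ (by rwa [card_range])
  obtain ⟨a, b, ha, hb, hab⟩ : ∃ a b, a ∈ visits ∧ b ∈ visits ∧ a < b :=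
    ⟨_, _, min'_mem _ _, max'_mem _ _, visits.min'_lt_max'_of_card hvisits⟩
  obtain ⟨k, rfl⟩ := Nat.exists_eq_add_of_lt hab
  rw [mem_filter, mem_range] at ha hb
  exact orderStatistic.le_of_le_card_filter _ _ (by omega)
    (le_card_filter_dist_nsmul_le k.succ_pos (by omega) hr ha.2 hb.2)

/-- For a toral translation, two close visits before time `n` generate `r` close visits
before time `(r-1)n`: if `d̂_n^{(2)}(z,α) ≤ ε` then for every `r ≥ 2`,
`d̂_{(r-1)n}^{(r)}(z,α) ≤ (2r-1) d̂_n^{(2)}(z,α)`. -/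
theorem toral_translation_multiple_visits {d : ℕ} (z α : Fin d → AddCircle (1 : ℝ))
    (n : ℕ) (ε : ℝ) (hε : hatd z α 2 n ≤ ε) :
    ∀ r : ℕ, 2 ≤ r →
      hatd z α r ((r - 1) * n) ≤ (2 * (r : ℝ) - 1) * hatd z α 2 n :=
  toral_translation_multiple_visits_general z α n
end

section
/- Let $(\Omega,\mathcal{F},\mathbb{P})$ be a probability space and $(\mathcal{D}_m)_{m\ge 1}$ a sequence of events. Suppose there exist constants and sequences such that for each $\delta>0$ there is $m(\delta)$ with $\mathbb{P}(\mathcal{D}_i\cap\mathcal{D}_j)-\mathbb{P}(\mathcal{D}_i)\mathbb{P}(\mathcal{D}_j)\le \delta\,\mathbb{P}(\mathcal{D}_i)\mathbb{P}(\mathcal{D}_j)+2i^{-10}\mathbb{P}(\mathcal{D}_j)+2j^{-10}\mathbb{P}(\mathcal{D}_i)+2(ij)^{-10}$ whenever $i\ge m(\delta)$ and $j-i\ge m(\delta)$. If $\sum_m \mathbb{P}(\mathcal{D}_m)=\infty$, then setting $Z_n=\sum_{m=1}^n 1_{\mathcal{D}_m}$ one has $\mathrm{Var}(Z_n)/\mathbb{E}(Z_n)^2\to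 0$, and consequently infinitely many $\mathcal{D}_m$ occur almost surely. -/
/-!
Let `Z_n` count the events `D_0, …, D_{n-1}` that occur and let `S_n = 𝔼 Z_n`; then `Var Z_n` is
the sum of the covariances `P(D_i ∩ D_j) - P(D_i) P(D_j)` over `i, j < n`. When `j` lies within
`m₀ + 1` of `i` or of `0`, bound the covariance by `P(D_i)`: each `i` has only `O(m₀)` such `j`,
so these pairs contribute `O(m₀ S_n)`. All other pairs obey the quasi-independence estimate and,
as `∑ i⁻¹⁰ ≤ 2`, contribute at most `δ S_n² + 8 S_n + 8`. Hence `Var Z_n / S_n² → 0`.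
By Chebyshev `P(Z_n ≤ S_n / 2) → 0`, while off `limsup D` the counts `Z_n` stay bounded, so each
of the sets `{∀ n, Z_n ≤ N}`, which cover the complement of `limsup D`, is null.
-/

open MeasureTheory ProbabilityTheory Filter Finset Topology

lemma sum_range_zpow_neg_le_two {k : ℕ} (hk : 2 ≤ k) (n : ℕ) :
    ∑ i ∈ range n, (i : ℝ) ^ (-(k : ℤ)) ≤ 2 := by
  -- Lean's convention `(0 : ℝ) ^ (-k) = 0` makes the `i = 0` term vanish.
  have hzero : ∀ i ∈ range n, i ∉ Ioo 0 n → (i : ℝ) ^ (-(k : ℤ)) = 0 := fun i hi hi' => by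
    obtain rfl : i = 0 := by simp only [mem_range, mem_Ioo] at hi hi'; omega
    simp [zero_zpow _ (by omega : -(k : ℤ) ≠ 0)]
  rw [← sum_subset (fun i hi => mem_range.2 (mem_Ioo.1 hi).2) hzero]
  calc ∑ i ∈ Ioo 0 n, (i : ℝ) ^ (-(k : ℤ)) ≤ ∑ i ∈ Ioo 0 n, ((i : ℝ) ^ 2)⁻¹ := by
        refine sum_le_sum fun i hi => ?_
        have hi : (1 : ℝ) ≤ i := by exact_mod_cast (mem_Ioo.1 hi).1
        rw [zpow_neg, zpow_natCast]
        exact inv_anti₀ (by positivity) (pow_le_pow_right₀ hi hk)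
    _ ≤ 2 := by simpa using sum_Ioo_inv_sq_le (α := ℝ) 0 n

/-- With `M = m₀ + 1`, every pair `(i, j)` not covered by the quasi-independence estimate satisfies
`IsNear M i j ∨ IsNear M j i`; the shift by one also catches the diagonal `i = j`. -/
def IsNear (M i j : ℕ) : Prop := j < M ∨ (i < j + M ∧ j < i + M)

instance (M i j : ℕ) : Decidable (IsNear M i j) := inferInstanceAs (Decidable (_ ∨ _))

lemma card_filter_isNear_le (M i n : ℕ) : #{j ∈ range n | IsNear M i j} ≤ 3 * M := by
  have hsub : {j ∈ range n | IsNear M i j} ⊆ range M ∪ Ico (i + 1 - M) (i + M) := by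
    intro j hj
    simp only [mem_filter, mem_union, mem_range, mem_Ico] at hj ⊢
    unfold IsNear at hj
    omega
  calc #{j ∈ range n | IsNear M i j} ≤ #(range M) + #(Ico (i + 1 - M) (i + M)) :=
        (card_le_card hsub).trans (card_union_le _ _)
    _ ≤ 3 * M := by rw [card_range, Nat.card_Ico]; omega

lemma sum_sum_ite_isNear_le {p : ℕ → ℝ} (hp : ∀ i, 0 ≤ p i) (M n : ℕ) :
    ∑ i ∈ range n, ∑ j ∈ range n, (if IsNear M i j then p i else 0) ≤
      3 * M * ∑ i ∈ range n, p i := by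
  rw [mul_sum]
  refine sum_le_sum fun i _ => ?_
  rw [← sum_filter, sum_const, nsmul_eq_mul]
  exact mul_le_mul_of_nonneg_right (by exact_mod_cast card_filter_isNear_le M i n) (hp i)

lemma le_add_ite_isNear {p a : ℕ → ℝ} {c : ℕ → ℕ → ℝ} {δ : ℝ} {m₀ : ℕ}
    (hp : ∀ i, 0 ≤ p i) (ha : ∀ i, 0 ≤ a i) (hδ : 0 ≤ δ)
    (hc_comm : ∀ i j, c i j = c j i) (hc_le : ∀ i j, c i j ≤ p i)
    (hfar : ∀ i j, m₀ ≤ i → i < j → m₀ ≤ j - i →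
      c i j ≤ δ * (p i * p j) + 2 * (a i * p j) + 2 * (a j * p i) + 2 * (a i * a j)) (i j : ℕ) :
    c i j ≤ δ * (p i * p j) + 2 * (a i * p j) + 2 * (a j * p i) + 2 * (a i * a j) +
      (if IsNear (m₀ + 1) i j then p i else 0) + (if IsNear (m₀ + 1) j i then p j else 0) := by
  have := hp i; have := hp j; have := ha i; have := ha j
  have hB : 0 ≤ δ * (p i * p j) + 2 * (a i * p j) + 2 * (a j * p i) + 2 * (a i * a j) := by
    positivity
  have := ite_nonneg (hp i) le_rfl (p := IsNear (m₀ + 1) i j)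
  have := ite_nonneg (hp j) le_rfl (p := IsNear (m₀ + 1) j i)
  by_cases hij : IsNear (m₀ + 1) i j
  · rw [if_pos hij]; linarith [hc_le i j]
  by_cases hji : IsNear (m₀ + 1) j i
  · rw [if_pos hji]; linarith [hc_le j i, hc_comm i j]
  simp only [hij, hji, if_false, add_zero]
  simp only [IsNear, not_or, not_and_or, not_lt] at hij hji
  rcases lt_or_gt_of_ne (show i ≠ j by omega) with h | h
  · exact hfar i j (by omega) h (by omega)
  · rw [hc_comm]; linarith [hfar j i (by omega) h (by omega)]

lemma sum_sum_le_of_quasiIndependent {p a : ℕ → ℝ} {c : ℕ → ℕ → ℝ} {δ : ℝ} {m₀ : ℕ}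
    (hp : ∀ i, 0 ≤ p i) (ha : ∀ i, 0 ≤ a i) (hδ : 0 ≤ δ)
    (hc_comm : ∀ i j, c i j = c j i) (hc_le : ∀ i j, c i j ≤ p i)
    (hfar : ∀ i j, m₀ ≤ i → i < j → m₀ ≤ j - i →
      c i j ≤ δ * (p i * p j) + 2 * (a i * p j) + 2 * (a j * p i) + 2 * (a i * a j)) (n : ℕ) :
    ∑ i ∈ range n, ∑ j ∈ range n, c i j ≤
      δ * (∑ i ∈ range n, p i) ^ 2 + 4 * (∑ i ∈ range n, a i) * (∑ i ∈ range n, p i) +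
        2 * (∑ i ∈ range n, a i) ^ 2 + 6 * (m₀ + 1) * ∑ i ∈ range n, p i := by
  have hnear := sum_sum_ite_isNear_le hp (m₀ + 1) n
  calc ∑ i ∈ range n, ∑ j ∈ range n, c i j
      ≤ ∑ i ∈ range n, ∑ j ∈ range n,
          (δ * (p i * p j) + 2 * (a i * p j) + 2 * (a j * p i) + 2 * (a i * a j) +
            (if IsNear (m₀ + 1) i j then p i else 0) + (if IsNear (m₀ + 1) j i then p j else 0)) :=
        sum_le_sum fun i _ => sum_le_sum fun j _ =>
          le_add_ite_isNear hp ha hδ hc_comm hc_le hfar i j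
    _ = δ * (∑ i ∈ range n, p i) ^ 2 + 4 * (∑ i ∈ range n, a i) * (∑ i ∈ range n, p i) +
          2 * (∑ i ∈ range n, a i) ^ 2 +
          ∑ i ∈ range n, ∑ j ∈ range n, (if IsNear (m₀ + 1) i j then p i else 0) +
          ∑ i ∈ range n, ∑ j ∈ range n, (if IsNear (m₀ + 1) j i then p j else 0) := by
        rw [show ∀ A S : ℝ, 4 * A * S = 2 * (A * S) + 2 * (S * A) by intros; ring]
        rw [sq, sq, sum_mul_sum, sum_mul_sum, sum_mul_sum, sum_mul_sum]
        simp only [mul_sum, ← sum_add_distrib]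
        exact sum_congr rfl fun i _ => sum_congr rfl fun j _ => by ring
    _ ≤ _ := by
        rw [sum_comm (f := fun i j => if IsNear (m₀ + 1) j i then p j else 0)]
        push_cast at hnear ⊢
        linarith

lemma tendsto_div_sq_zero_of_le {v S : ℕ → ℝ} (hv : ∀ n, 0 ≤ v n) (hS : Tendsto S atTop atTop)
    (hle : ∀ δ > 0, ∃ K L : ℝ, ∀ n, v n ≤ δ * S n ^ 2 + K * S n + L) :
    Tendsto (fun n => v n / S n ^ 2) atTop (𝓝 0) := by
  refine tendsto_order.2
    ⟨fun ε hε => .of_forall fun n => hε.trans_le (by have := hv n; positivity), fun ε hε => ?_⟩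
  obtain ⟨K, L, hKL⟩ := hle (ε / 2) (half_pos hε)
  have hsmall : Tendsto (fun x : ℝ => K * x⁻¹ + L * x⁻¹ ^ 2) atTop (𝓝 0) := by
    simpa using
      (tendsto_inv_atTop_zero.const_mul K).add ((tendsto_inv_atTop_zero.pow 2).const_mul L)
  filter_upwards [hS.eventually_gt_atTop 0,
    (hsmall.comp hS).eventually (gt_mem_nhds (half_pos hε))] with n hpos hlt
  calc v n / S n ^ 2 ≤ (ε / 2 * S n ^ 2 + K * S n + L) / S n ^ 2 := by gcongr; exact hKL n
    _ = ε / 2 + (K * (S n)⁻¹ + L * (S n)⁻¹ ^ 2) := by field_simp; ring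
    _ < ε := by simp only [Function.comp_apply] at hlt; linarith

section Events

variable {Ω : Type*} {D : ℕ → Set Ω}

noncomputable def occurrenceCount (D : ℕ → Set Ω) (n : ℕ) (ω : Ω) : ℝ :=
  ∑ m ∈ range n, (D m).indicator (fun _ => 1) ω

lemma exists_occurrenceCount_le_of_notMem_limsup {ω : Ω} (hω : ω ∉ limsup D atTop) :
    ∃ N : ℕ, ∀ n, occurrenceCount D n ω ≤ N := by
  classical
  rw [mem_limsup_iff_frequently_mem, not_frequently, eventually_atTop] at hω
  obtain ⟨N, hN⟩ := hω
  refine ⟨N, fun n => ?_⟩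
  have hcard : occurrenceCount D n ω = #{m ∈ range n | ω ∈ D m} := by
    simp [occurrenceCount, Set.indicator_apply]
  rw [hcard, Nat.cast_le]
  calc #{m ∈ range n | ω ∈ D m} ≤ #(range N) := card_le_card fun m hm => by
        simp only [mem_filter, mem_range] at hm ⊢
        by_contra! h
        exact hN m h hm.2
    _ = N := card_range N

variable [MeasurableSpace Ω] {μ : Measure Ω}

lemma memLp_indicator_one [IsFiniteMeasure μ] (p : ENNReal) {s : Set Ω} (hs : MeasurableSet s) :
    MemLp (s.indicator fun _ => (1 : ℝ)) p μ :=
  memLp_indicator_const p hs 1 (.inr (measure_ne_top μ s))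

lemma covariance_indicator_one [IsProbabilityMeasure μ] {s t : Set Ω} (hs : MeasurableSet s)
    (ht : MeasurableSet t) :
    cov[s.indicator fun _ => 1, t.indicator fun _ => 1; μ] =
      μ.real (s ∩ t) - μ.real s * μ.real t := by
  have hmul : ((s.indicator fun _ => (1 : ℝ)) * t.indicator fun _ => 1) =
      (s ∩ t).indicator fun _ => 1 := Set.inter_indicator_one.symm
  rw [covariance_eq_sub (memLp_indicator_one 2 hs) (memLp_indicator_one 2 ht), hmul]
  simp only [integral_indicator_const _ hs, integral_indicator_const _ ht,
    integral_indicator_const _ (hs.inter ht), smul_eq_mul, mul_one]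

variable (hD : ∀ m, MeasurableSet (D m))
include hD

lemma memLp_occurrenceCount [IsFiniteMeasure μ] (n : ℕ) : MemLp (occurrenceCount D n) 2 μ :=
  memLp_finsetSum _ fun m _ => memLp_indicator_one 2 (hD m)

lemma integral_occurrenceCount [IsFiniteMeasure μ] (n : ℕ) :
    μ[occurrenceCount D n] = ∑ m ∈ range n, μ.real (D m) := by
  unfold occurrenceCount
  rw [integral_finsetSum _ fun m _ => (memLp_indicator_one 1 (hD m)).integrable le_rfl]
  exact sum_congr rfl fun m _ => integral_indicator_one (hD m)

lemma variance_occurrenceCount [IsProbabilityMeasure μ] (n : ℕ) :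
    Var[occurrenceCount D n; μ] =
      ∑ i ∈ range n, ∑ j ∈ range n, (μ.real (D i ∩ D j) - μ.real (D i) * μ.real (D j)) := by
  unfold occurrenceCount
  rw [variance_fun_sum' fun m _ => memLp_indicator_one 2 (hD m)]
  exact sum_congr rfl fun i _ => sum_congr rfl fun j _ => covariance_indicator_one (hD i) (hD j)

lemma measure_occurrenceCount_le_half_le [IsFiniteMeasure μ] (n : ℕ)
    (hS : 0 < ∑ m ∈ range n, μ.real (D m)) :
    μ {ω | occurrenceCount D n ω ≤ (∑ m ∈ range n, μ.real (D m)) / 2} ≤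
      ENNReal.ofReal (4 * (Var[occurrenceCount D n; μ] / (∑ m ∈ range n, μ.real (D m)) ^ 2)) := by
  set S := ∑ m ∈ range n, μ.real (D m)
  calc μ {ω | occurrenceCount D n ω ≤ S / 2}
      ≤ μ {ω | S / 2 ≤ |occurrenceCount D n ω - μ[occurrenceCount D n]|} := by
        refine measure_mono fun ω hω => ?_
        rw [Set.mem_ofPred_eq] at hω ⊢
        rw [integral_occurrenceCount hD, abs_sub_comm]
        exact (by linarith : S / 2 ≤ S - _).trans (le_abs_self _)
    _ ≤ ENNReal.ofReal (Var[occurrenceCount D n; μ] / (S / 2) ^ 2) :=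
        meas_ge_le_variance_div_sq (memLp_occurrenceCount hD n) (by positivity)
    _ = ENNReal.ofReal (4 * (Var[occurrenceCount D n; μ] / S ^ 2)) := by ring_nf

lemma measure_limsup_eq_one_of_tendsto_variance_div_sq [IsProbabilityMeasure μ]
    (hS : Tendsto (fun n => ∑ m ∈ range n, μ.real (D m)) atTop atTop)
    (hvar : Tendsto (fun n => Var[occurrenceCount D n; μ] / (∑ m ∈ range n, μ.real (D m)) ^ 2)
      atTop (𝓝 0)) :
    μ (limsup D atTop) = 1 := by
  rw [← prob_compl_eq_zero_iff (.measurableSet_limsup hD)]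
  refine measure_mono_null (t := ⋃ N : ℕ, {ω | ∀ n, occurrenceCount D n ω ≤ N})
    (fun ω hω => Set.mem_iUnion.2 (exists_occurrenceCount_le_of_notMem_limsup hω))
    (measure_iUnion_null fun N => nonpos_iff_eq_zero.1 ?_)
  have hlim : Tendsto (fun n => ENNReal.ofReal
      (4 * (Var[occurrenceCount D n; μ] / (∑ m ∈ range n, μ.real (D m)) ^ 2))) atTop (𝓝 0) := by
    simpa using ENNReal.tendsto_ofReal (hvar.const_mul 4)
  refine ge_of_tendsto hlim ?_
  filter_upwards [hS.eventually_ge_atTop (2 * N), hS.eventually_gt_atTop 0] with n hN hpos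
  refine (measure_mono fun ω hω => ?_).trans (measure_occurrenceCount_le_half_le hD n hpos)
  exact (hω n).trans (by linarith)

lemma variance_occurrenceCount_le [IsProbabilityMeasure μ] {δ : ℝ} (hδ : 0 ≤ δ) {m₀ : ℕ}
    (hfar : ∀ i j : ℕ, m₀ ≤ i → i < j → m₀ ≤ j - i →
      μ.real (D i ∩ D j) - μ.real (D i) * μ.real (D j) ≤
        δ * (μ.real (D i) * μ.real (D j)) + 2 * (i : ℝ) ^ (-10 : ℤ) * μ.real (D j) +
          2 * (j : ℝ) ^ (-10 : ℤ) * μ.real (D i) + 2 * ((i : ℝ) * (j : ℝ)) ^ (-10 : ℤ)) (n : ℕ) :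
    Var[occurrenceCount D n; μ] ≤
      δ * (∑ m ∈ range n, μ.real (D m)) ^ 2 + (6 * m₀ + 14) * ∑ m ∈ range n, μ.real (D m) + 8 := by
  have hsum := sum_sum_le_of_quasiIndependent
    (c := fun i j => μ.real (D i ∩ D j) - μ.real (D i) * μ.real (D j))
    (a := fun i => (i : ℝ) ^ (-10 : ℤ)) (fun _ => measureReal_nonneg) (fun _ => by positivity) hδ
    (fun i j => by simp only [Set.inter_comm, mul_comm])
    (fun i j => by
      have := measureReal_mono (μ := μ) (Set.inter_subset_left (s := D i) (t := D j))
      have : 0 ≤ μ.real (D i) * μ.real (D j) := by positivity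
      linarith)
    (fun i j h₁ h₂ h₃ => (hfar i j h₁ h₂ h₃).trans_eq (by rw [mul_zpow]; ring)) n
  have hA := sum_range_zpow_neg_le_two (k := 10) (by norm_num) n
  push_cast at hA
  have hA₀ : 0 ≤ ∑ i ∈ range n, (i : ℝ) ^ (-10 : ℤ) := sum_nonneg fun _ _ => by positivity
  have hS₀ : 0 ≤ ∑ m ∈ range n, μ.real (D m) := sum_nonneg fun _ _ => measureReal_nonneg
  rw [variance_occurrenceCount hD]
  nlinarith [mul_le_mul_of_nonneg_right hA hS₀]

end Events

/-- Quasi-independent Borel–Cantelli: under the asymptotic quasi-independence estimate on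
pairs `(D_i, D_j)` with `i, j - i ≥ m(δ)`, divergence of `∑ P(D_m)` implies
`Var(Z_n)/E(Z_n)² → 0` for `Z_n = ∑_{m<n} 1_{D_m}`, and infinitely many `D_m` occur a.s. -/
theorem quasi_independent_borel_cantelli {Ω : Type*} [MeasurableSpace Ω]
    (μ : Measure Ω) [IsProbabilityMeasure μ]
    (D : ℕ → Set Ω) (hD : ∀ m, MeasurableSet (D m))
    (hqi : ∀ δ : ℝ, 0 < δ → ∃ m₀ : ℕ, ∀ i j : ℕ, m₀ ≤ i → i < j → m₀ ≤ j - i →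
      (μ (D i ∩ D j)).toReal - (μ (D i)).toReal * (μ (D j)).toReal ≤
        δ * ((μ (D i)).toReal * (μ (D j)).toReal) +
          2 * (i : ℝ) ^ (-10 : ℤ) * (μ (D j)).toReal +
          2 * (j : ℝ) ^ (-10 : ℤ) * (μ (D i)).toReal +
          2 * ((i : ℝ) * (j : ℝ)) ^ (-10 : ℤ))
    (hdiv : Tendsto (fun n => ∑ m ∈ Finset.range n, (μ (D m)).toReal) atTop atTop) :
    Tendsto (fun n =>
        variance (fun ω => ∑ m ∈ Finset.range n,
          Set.indicator (D m) (fun _ => (1 : ℝ)) ω) μ /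
          (∑ m ∈ Finset.range n, (μ (D m)).toReal) ^ 2) atTop (nhds 0) ∧
      μ (Filter.limsup D atTop) = 1 := by
  have hvar : Tendsto (fun n => Var[occurrenceCount D n; μ] / (∑ m ∈ range n, μ.real (D m)) ^ 2)
      atTop (𝓝 0) :=
    tendsto_div_sq_zero_of_le (fun n => variance_nonneg _ _) hdiv fun δ hδ => by
      obtain ⟨m₀, hm₀⟩ := hqi δ hδ
      exact ⟨6 * m₀ + 14, 8, variance_occurrenceCount_le hD hδ.le hm₀⟩
  exact ⟨hvar, measure_limsup_eq_one_of_tendsto_variance_div_sq hD hdiv hvar⟩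
end
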